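/- Let Y be a homology 3-sphere with two negative-definite spin bounding 4-manifolds X1, X2 with second Betti numbers β1, β2 satisfying 0 < β1 < β2. Assuming Furuta's 10/8-inequality (for a closed spin 4-manifold X with nonzero signature, b_2(X) ≥ (10/8)|σ(X)| + 2), one obtains β2 ≤ 9β1 + 8. Consequently, if ds̄(Y) < ds(Y) then ds(Y) − ds̄(Y) ≤ 8(ds̄(Y) + 1). -/
import Mathlib

/-- Furuta's 10/8 inequality applied to the closed spin 4-manifold `X2 ∪ (−X1)` glued
from two negative-definite spin boundings of a homology 3-sphere `Y`
(with `b₂ = β1 + β2` and `σ = β2 − β1`) yields `β2 ≤ 9 β1 + 8`; consequently,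
if `ds̄(Y) < ds(Y)` (with `8 ds(Y) = β2`, `8 ds̄(Y) = β1`) then
`ds(Y) − ds̄(Y) ≤ 8 (ds̄(Y) + 1)`. -/
theorem stmt_0 (β1 β2 : ℕ) (h1 : 0 < β1) (h12 : β1 < β2)
    (furuta : ((β1 : ℚ) + β2) ≥ 10 / 8 * |(β2 : ℚ) - β1| + 2) :
    β2 ≤ 9 * β1 + 8 ∧
      ∀ ds dsbar : ℕ, 8 * ds = β2 → 8 * dsbar = β1 → dsbar < ds →
        ds - dsbar ≤ 8 * (dsbar + 1) := by
  have habs : |(β2 : ℚ) - β1| = (β2 : ℚ) - β1 := by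
    rw [abs_of_nonneg]
    have : (β1 : ℚ) < β2 := by exact_mod_cast h12
    linarith
  rw [habs] at furuta
  have key : β2 ≤ 9 * β1 + 8 := by
    have : (β2 : ℚ) ≤ 9 * β1 + 8 := by linarith
    exact_mod_cast this
  refine ⟨key, ?_⟩
  intro ds dsbar hds hdsbar h
  omega
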